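/- arXiv:0902.1248 — 3 statements merged into one kernel-verified Lean document; each statement's English description precedes it below -/
import Mathlib

section
/- Let (x₀, ξ₀) ∈ Ω satisfy 𝔤_{(x₀,ξ₀)} = {0}. Then there is an open neighborhood U of (x₀, ξ₀) in ℝⁿ × ℝⁿ such that: (i) 𝔤_{(x,ξ)} = {0} for every (x, ξ) ∈ U; (ii) the derivative dJ(x,ξ) : ℝⁿ × ℝⁿ → 𝔤* is surjective at every point (x,ξ) ∈ U (so J is a submersion on U); and (iii) the critical set of ψ intersected with U × 𝔤 equals (Ω ∩ U) × {0}. -/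
/-!
The isotropy algebra at `p = (x, ξ)` is the kernel of the infinitesimal action
`X ↦ (X x, X ξ)`, which depends continuously on `p`; injective linear maps out of a
finite-dimensional space form an open set, so trivial isotropy is an open condition.
By skew-symmetry, `dJ(x, ξ)(u, η)(A) = ⟨(u, η), (-A ξ, A x)⟩`, so the transpose of `dJ(x, ξ)` is
injective, i.e. `dJ(x, ξ)` is onto, exactly when the isotropy is trivial. Finally
`dψ(x, ξ, X)(u, η, Y) = ⟨X x, η⟩ - ⟨u, X ξ⟩ + ⟨Y x, ξ⟩` vanishes identically iff `(x, ξ) ∈ Ω`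
and `X` lies in the isotropy algebra at `(x, ξ)`, which is trivial on the neighborhood.
-/

attribute [local instance] Matrix.normedAddCommGroup Matrix.normedSpace

open Matrix Function

theorem Matrix.mulVec_dotProduct_of_transpose_eq_neg {m R : Type*} [Fintype m] [CommRing R]
    {A : Matrix m m R} (hA : Aᵀ = -A) (u v : m → R) :
    (A *ᵥ u) ⬝ᵥ v = -(u ⬝ᵥ (A *ᵥ v)) := by
  rw [← vecMul_transpose, ← dotProduct_mulVec, hA, neg_mulVec, dotProduct_neg]

section

variable {n : ℕ} (𝔤 : Submodule ℝ (Matrix (Fin n) (Fin n) ℝ))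

noncomputable def infinitesimalAction :
    ((Fin n → ℝ) × (Fin n → ℝ)) →L[ℝ] 𝔤 →L[ℝ] (Fin n → ℝ) × (Fin n → ℝ) :=
  LinearMap.toContinuousBilinearMap <|
    LinearMap.mk₂ ℝ (fun p X => (X.val *ᵥ p.1, X.val *ᵥ p.2))
      (fun _ _ _ => by simp [mulVec_add]) (fun _ _ _ => by simp [mulVec_smul])
      (fun _ _ _ => by simp [add_mulVec]) (fun _ _ _ => by simp [smul_mulVec])

@[simp]
theorem infinitesimalAction_apply (p : (Fin n → ℝ) × (Fin n → ℝ)) (X : 𝔤) :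
    infinitesimalAction 𝔤 p X = (X.val *ᵥ p.1, X.val *ᵥ p.2) :=
  rfl

theorem injective_infinitesimalAction_iff (p : (Fin n → ℝ) × (Fin n → ℝ)) :
    Injective (infinitesimalAction 𝔤 p) ↔
      ∀ X : 𝔤, X.val *ᵥ p.1 = 0 → X.val *ᵥ p.2 = 0 → X = 0 := by
  simp [injective_iff_map_eq_zero, Prod.ext_iff]

theorem isOpen_setOf_injective_infinitesimalAction :
    IsOpen {p | Injective (infinitesimalAction 𝔤 p)} :=
  ContinuousLinearMap.isOpen_injective.preimage (infinitesimalAction 𝔤).continuous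

variable {𝔤}

theorem exists_dual_eq_of_injective_infinitesimalAction (h𝔤 : ∀ A ∈ 𝔤, Aᵀ = -A)
    {p : (Fin n → ℝ) × (Fin n → ℝ)} (hp : Injective (infinitesimalAction 𝔤 p))
    (φ : Module.Dual ℝ 𝔤) :
    ∃ u η : Fin n → ℝ, ∀ A : 𝔤, φ A = (A.val *ᵥ u) ⬝ᵥ p.2 + (A.val *ᵥ p.1) ⬝ᵥ η := by
  let dJ : ((Fin n → ℝ) × (Fin n → ℝ)) →ₗ[ℝ] Module.Dual ℝ 𝔤 :=
    LinearMap.mk₂ ℝ (fun q A => (A.val *ᵥ q.1) ⬝ᵥ p.2 + (A.val *ᵥ p.1) ⬝ᵥ q.2)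
      (fun _ _ _ => by
        simp only [Prod.fst_add, Prod.snd_add, mulVec_add, add_dotProduct, dotProduct_add]; ring)
      (fun _ _ _ => by simp [mulVec_smul]; ring)
      (fun _ _ _ => by simp [add_mulVec]; ring)
      (fun _ _ _ => by simp [smul_mulVec]; ring)
  have hflip : Injective dJ.flip := by
    refine (injective_iff_map_eq_zero _).2 fun A hA => (injective_iff_map_eq_zero _).1 hp A ?_
    have hA' (q : (Fin n → ℝ) × (Fin n → ℝ)) :
        (A.val *ᵥ q.1) ⬝ᵥ p.2 + (A.val *ᵥ p.1) ⬝ᵥ q.2 = 0 :=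
      LinearMap.congr_fun hA q
    have hx : (A.val *ᵥ p.1) ⬝ᵥ (A.val *ᵥ p.1) = 0 := by simpa using hA' (0, A.val *ᵥ p.1)
    have hξ : (A.val *ᵥ p.2) ⬝ᵥ (A.val *ᵥ p.2) = 0 := by
      simpa [Matrix.mulVec_dotProduct_of_transpose_eq_neg (h𝔤 _ A.2), -mulVec_mulVec]
        using hA' (A.val *ᵥ p.2, 0)
    exact Prod.ext (dotProduct_self_eq_zero.1 hx) (dotProduct_self_eq_zero.1 hξ)
  obtain ⟨q, hq⟩ := LinearMap.flip_injective_iff₁.1 hflip φ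
  exact ⟨q.1, q.2, fun A => (LinearMap.congr_fun hq A).symm⟩

variable (𝔤)

noncomputable def phase (q : (Fin n → ℝ) × (Fin n → ℝ) × 𝔤) : ℝ :=
  (q.2.2.val *ᵥ q.1) ⬝ᵥ q.2.1

theorem fderiv_phase_apply (x ξ u η : Fin n → ℝ) (X Y : 𝔤) :
    fderiv ℝ (phase 𝔤) (x, ξ, X) (u, η, Y) =
      (X.val *ᵥ x) ⬝ᵥ η + (X.val *ᵥ u + Y.val *ᵥ x) ⬝ᵥ ξ := by
  let D : (Fin n → ℝ) →L[ℝ] (Fin n → ℝ) →L[ℝ] ℝ := (dotProductBilin ℝ ℝ).toContinuousBilinearMap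
  let M : 𝔤 →L[ℝ] (Fin n → ℝ) →L[ℝ] (Fin n → ℝ) :=
    ((mulVecBilin ℝ ℝ).comp 𝔤.subtype).toContinuousBilinearMap
  have hM : HasFDerivAt (fun q : (Fin n → ℝ) × (Fin n → ℝ) × 𝔤 => M q.2.2 q.1) _ (x, ξ, X) :=
    M.hasFDerivAt_of_bilinear (by fun_prop) (by fun_prop)
  have hD := D.hasFDerivAt_of_bilinear hM
    (by fun_prop : HasFDerivAt (fun q : (Fin n → ℝ) × (Fin n → ℝ) × 𝔤 => q.2.1) _ _)
  -- `hD` matches the goal only after unfolding `phase`, `D`, `M` and the two (defeq) topologies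
  -- on `𝔤`, so it is applied by defeq rather than rewritten with.
  exact DFunLike.congr_fun hD.fderiv (u, η, Y)

variable {𝔤}

theorem fderiv_phase_eq_zero_iff (h𝔤 : ∀ A ∈ 𝔤, Aᵀ = -A) (x ξ : Fin n → ℝ) (X : 𝔤) :
    fderiv ℝ (phase 𝔤) (x, ξ, X) = 0 ↔
      (∀ A ∈ 𝔤, (A *ᵥ x) ⬝ᵥ ξ = 0) ∧ X.val *ᵥ x = 0 ∧ X.val *ᵥ ξ = 0 := by
  have skew := Matrix.mulVec_dotProduct_of_transpose_eq_neg (h𝔤 _ X.2)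
  simp_rw [ContinuousLinearMap.ext_iff, Prod.forall, fderiv_phase_apply,
    _root_.zero_apply]
  constructor
  · intro h
    have hXx : X.val *ᵥ x = 0 := by simpa using h 0 (X.val *ᵥ x) 0
    have hXξ : X.val *ᵥ ξ = 0 := by
      have h' := h (X.val *ᵥ ξ) 0 0
      simp only [hXx, ZeroMemClass.coe_zero, zero_mulVec, add_zero, dotProduct_zero,
        zero_add] at h'
      rwa [skew, neg_eq_zero, dotProduct_self_eq_zero] at h'
    exact ⟨fun A hA => by simpa using h 0 0 ⟨A, hA⟩, hXx, hXξ⟩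
  · rintro ⟨hΩ, hXx, hXξ⟩ u η Y
    simp [add_dotProduct, skew, hXx, hXξ, hΩ _ Y.2]

end

theorem statement2_general (n : ℕ) (𝔤 : Submodule ℝ (Matrix (Fin n) (Fin n) ℝ))
    (h𝔤 : ∀ A ∈ 𝔤, Aᵀ = -A)
    (ψ : (Fin n → ℝ) × (Fin n → ℝ) × ↥𝔤 → ℝ)
    (hψ : ∀ (x ξ : Fin n → ℝ) (X : ↥𝔤), ψ (x, ξ, X) = (X.val *ᵥ x) ⬝ᵥ ξ)
    (x₀ ξ₀ : Fin n → ℝ)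
    (hiso : ∀ X : ↥𝔤, X.val *ᵥ x₀ = 0 → X.val *ᵥ ξ₀ = 0 → X = 0) :
    ∃ U : Set ((Fin n → ℝ) × (Fin n → ℝ)), IsOpen U ∧ (x₀, ξ₀) ∈ U ∧
      (∀ p ∈ U, ∀ X : ↥𝔤, X.val *ᵥ p.1 = 0 → X.val *ᵥ p.2 = 0 → X = 0) ∧
      (∀ p ∈ U, ∀ φ : Module.Dual ℝ ↥𝔤, ∃ u η : Fin n → ℝ,
        ∀ A : ↥𝔤, φ A = (A.val *ᵥ u) ⬝ᵥ p.2 + (A.val *ᵥ p.1) ⬝ᵥ η) ∧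
      (∀ (x ξ : Fin n → ℝ) (X : ↥𝔤), (x, ξ) ∈ U →
        (fderiv ℝ ψ (x, ξ, X) = 0 ↔ (∀ A ∈ 𝔤, (A *ᵥ x) ⬝ᵥ ξ = 0) ∧ X = 0)) := by
  have hψ_eq : ψ = phase 𝔤 := funext fun ⟨x, ξ, X⟩ => hψ x ξ X
  refine ⟨{p | Injective (infinitesimalAction 𝔤 p)},
    isOpen_setOf_injective_infinitesimalAction 𝔤,
    (injective_infinitesimalAction_iff 𝔤 _).2 hiso,
    fun p hp => (injective_infinitesimalAction_iff 𝔤 p).1 hp,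
    fun p hp => exists_dual_eq_of_injective_infinitesimalAction h𝔤 hp,
    fun x ξ X hp => ?_⟩
  rw [hψ_eq, fderiv_phase_eq_zero_iff h𝔤]
  refine and_congr_right fun _ => ⟨fun hX => ?_, fun hX => by simp [hX]⟩
  exact (injective_infinitesimalAction_iff 𝔤 (x, ξ)).1 hp X hX.1 hX.2

/-- If `(x₀, ξ₀) ∈ Ω` has trivial isotropy algebra, then there is an open
neighborhood `U` of `(x₀, ξ₀)` in `ℝⁿ × ℝⁿ` such that: (i) the isotropy algebra is trivial
at every point of `U`; (ii) the derivative `dJ(x,ξ) : ℝⁿ × ℝⁿ → 𝔤*` is surjective at every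
point of `U` (so `J` is a submersion on `U`); and (iii) the critical set of `ψ` intersected
with `U × 𝔤` equals `(Ω ∩ U) × {0}`. -/
theorem statement2 (n : ℕ) (𝔤 : Submodule ℝ (Matrix (Fin n) (Fin n) ℝ))
    (h𝔤 : ∀ A ∈ 𝔤, Aᵀ = -A)
    (ψ : (Fin n → ℝ) × (Fin n → ℝ) × ↥𝔤 → ℝ)
    (hψ : ∀ (x ξ : Fin n → ℝ) (X : ↥𝔤), ψ (x, ξ, X) = (X.val *ᵥ x) ⬝ᵥ ξ)
    (x₀ ξ₀ : Fin n → ℝ)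
    (hΩ : ∀ A ∈ 𝔤, (A *ᵥ x₀) ⬝ᵥ ξ₀ = 0)
    (hiso : ∀ X : ↥𝔤, X.val *ᵥ x₀ = 0 → X.val *ᵥ ξ₀ = 0 → X = 0) :
    ∃ U : Set ((Fin n → ℝ) × (Fin n → ℝ)), IsOpen U ∧ (x₀, ξ₀) ∈ U ∧
      (∀ p ∈ U, ∀ X : ↥𝔤, X.val *ᵥ p.1 = 0 → X.val *ᵥ p.2 = 0 → X = 0) ∧
      (∀ p ∈ U, ∀ φ : Module.Dual ℝ ↥𝔤, ∃ u η : Fin n → ℝ,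
        ∀ A : ↥𝔤, φ A = (A.val *ᵥ u) ⬝ᵥ p.2 + (A.val *ᵥ p.1) ⬝ᵥ η) ∧
      (∀ (x ξ : Fin n → ℝ) (X : ↥𝔤), (x, ξ) ∈ U →
        (fderiv ℝ ψ (x, ξ, X) = 0 ↔ (∀ A ∈ 𝔤, (A *ᵥ x) ⬝ᵥ ξ = 0) ∧ X = 0)) :=
  statement2_general n 𝔤 h𝔤 ψ hψ x₀ ξ₀ hiso
end

section
/- Let E and F be finite-dimensional real normed vector spaces, U ⊆ E open, α : U → F twice continuously differentiable, and ψ : F → ℝ twice continuously differentiable on a neighborhood of α(z) for some z ∈ U. If the derivative of ψ vanishes at α(z), i.e. Dψ(α(z)) = 0, then the second derivative of the composition satisfies D²(ψ ∘ α)(z)(u, v) = D²ψ(α(z))(Dα(z)u, Dα(z)v) for all u, v ∈ E. (At a critical point of ψ, the Hessian of ψ ∘ α is the pullback of the Hessian of ψ along the derivative of α; this is Equation (15) of the paper and the basis of its Lemma 2.) -/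
/-!
Differentiating the chain rule `D(ψ ∘ α) = (Dψ ∘ α) ∘ Dα` once more by the product rule gives
`D²(ψ ∘ α)(z)(u, v) = D²ψ(α z)(Dα(z) u, Dα(z) v) + Dψ(α z)(D²α(z)(u, v))`,
and at a critical point of `ψ` the second term vanishes.
-/

open Filter Topology

section SecondOrderChainRule

variable {𝕜 E F G : Type*} [NontriviallyNormedField 𝕜]
  [NormedAddCommGroup E] [NormedSpace 𝕜 E] [NormedAddCommGroup F] [NormedSpace 𝕜 F]
  [NormedAddCommGroup G] [NormedSpace 𝕜 G]

theorem fderiv_comp_eventuallyEq {f : F → G} {g : E → F} {x : E}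
    (hf : ∀ᶠ y in 𝓝 (g x), DifferentiableAt 𝕜 f y) (hg : ∀ᶠ y in 𝓝 x, DifferentiableAt 𝕜 g y)
    (hgx : ContinuousAt g x) :
    fderiv 𝕜 (f ∘ g) =ᶠ[𝓝 x] fun y => (fderiv 𝕜 f (g y)).comp (fderiv 𝕜 g y) := by
  filter_upwards [hg, hgx.eventually hf] with y hgy hfy
  exact fderiv_comp y hfy hgy

theorem fderiv_fderiv_comp_apply {f : F → G} {g : E → F} {x : E}
    (hf : ContDiffAt 𝕜 2 f (g x)) (hg : ContDiffAt 𝕜 2 g x) (u v : E) :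
    fderiv 𝕜 (fderiv 𝕜 (f ∘ g)) x u v =
      fderiv 𝕜 (fderiv 𝕜 f) (g x) (fderiv 𝕜 g x u) (fderiv 𝕜 g x v) +
        fderiv 𝕜 f (g x) (fderiv 𝕜 (fderiv 𝕜 g) x u v) := by
  have hg₁ : DifferentiableAt 𝕜 g x := hg.differentiableAt two_ne_zero
  have hf₂ : DifferentiableAt 𝕜 (fderiv 𝕜 f) (g x) :=
    (hf.fderiv_right (m := 1) one_add_one_eq_two.le).differentiableAt one_ne_zero
  have hg₂ : DifferentiableAt 𝕜 (fderiv 𝕜 g) x :=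
    (hg.fderiv_right (m := 1) one_add_one_eq_two.le).differentiableAt one_ne_zero
  have hDf_g : DifferentiableAt 𝕜 (fun y => fderiv 𝕜 f (g y)) x := hf₂.comp x hg₁
  have chain : fderiv 𝕜 (f ∘ g) =ᶠ[𝓝 x] fun y => (fderiv 𝕜 f (g y)).comp (fderiv 𝕜 g y) :=
    fderiv_comp_eventuallyEq
      ((hf.eventually (by simp)).mono fun _ h => h.differentiableAt two_ne_zero)
      ((hg.eventually (by simp)).mono fun _ h => h.differentiableAt two_ne_zero)
      hg₁.continuousAt
  rw [chain.fderiv_eq, fderiv_clm_comp hDf_g hg₂, fderiv_fun_comp x hf₂ hg₁]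
  simp only [add_apply, ContinuousLinearMap.comp_apply]
  exact add_comm _ _

end SecondOrderChainRule

theorem statement6_general {E F : Type*}
    [NormedAddCommGroup E] [NormedSpace ℝ E]
    [NormedAddCommGroup F] [NormedSpace ℝ F]
    (U : Set E) (hU : IsOpen U) (α : E → F) (hα : ContDiffOn ℝ 2 α U)
    (z : E) (hz : z ∈ U) (ψ : F → ℝ) (hψ : ContDiffAt ℝ 2 ψ (α z))
    (hcrit : fderiv ℝ ψ (α z) = 0) :
    ∀ u v : E,
      fderiv ℝ (fderiv ℝ (ψ ∘ α)) z u v =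
        fderiv ℝ (fderiv ℝ ψ) (α z) (fderiv ℝ α z u) (fderiv ℝ α z v) := by
  intro u v
  rw [fderiv_fderiv_comp_apply hψ (hα.contDiffAt (hU.mem_nhds hz)), hcrit,
    zero_apply, add_zero]

/-- Let `E`, `F` be finite-dimensional real normed vector spaces, `U ⊆ E`
open, `α : U → F` twice continuously differentiable, and `ψ : F → ℝ` twice continuously
differentiable on a neighborhood of `α z` for some `z ∈ U`. If `Dψ(α z) = 0`, then
`D²(ψ ∘ α)(z)(u, v) = D²ψ(α z)(Dα(z) u, Dα(z) v)` for all `u, v ∈ E`. -/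
theorem statement6 {E F : Type*}
    [NormedAddCommGroup E] [NormedSpace ℝ E] [FiniteDimensional ℝ E]
    [NormedAddCommGroup F] [NormedSpace ℝ F] [FiniteDimensional ℝ F]
    (U : Set E) (hU : IsOpen U) (α : E → F) (hα : ContDiffOn ℝ 2 α U)
    (z : E) (hz : z ∈ U) (ψ : F → ℝ) (hψ : ContDiffAt ℝ 2 ψ (α z))
    (hcrit : fderiv ℝ ψ (α z) = 0) :
    ∀ u v : E,
      fderiv ℝ (fderiv ℝ (ψ ∘ α)) z u v =
        fderiv ℝ (fderiv ℝ ψ) (α z) (fderiv ℝ α z u) (fderiv ℝ α z v) :=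
  statement6_general U hU α hα z hz ψ hψ hcrit
end

section
/- The critical set of f is the linear subspace (ker L) × (range L)^⊥ of ℝᵐ × ℝⁿ, and the second derivative of f at any point is the constant symmetric bilinear form ((u, η), (v, ζ)) ↦ ⟨Lu, ζ⟩ + ⟨Lv, η⟩, whose kernel (radical) equals (ker L) × (range L)^⊥. In particular, at every critical point of f, the kernel of the Hessian of f coincides with the tangent space of the critical set of f. -/
open scoped RealInnerProductSpace

/-! `f` is the continuous bilinear map `(w, ξ) ↦ ⟪L w, ξ⟫`, so its derivative at `p` is
`(u, η) ↦ ⟪L p.1, η⟫ + ⟪L u, p.2⟫`; this is linear in `p`, so the second derivative is constant.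
The vanishing of `⟪L a, ζ⟫ + ⟪L v, b⟫` for all `v, ζ` splits, with `v = 0, ζ = L a` and with
`ζ = 0`, into `L a = 0` and `b ⊥ range L`. -/

section Bilinear

variable {𝕜 E F G : Type*} [NontriviallyNormedField 𝕜]
  [NormedAddCommGroup E] [NormedSpace 𝕜 E] [NormedAddCommGroup F] [NormedSpace 𝕜 F]
  [NormedAddCommGroup G] [NormedSpace 𝕜 G]

theorem ContinuousLinearMap.fderiv_uncurry (B : E →L[𝕜] F →L[𝕜] G) :
    fderiv 𝕜 (fun p : E × F => B p.1 p.2) = B.deriv₂ :=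
  funext B.isBoundedBilinearMap.fderiv

theorem ContinuousLinearMap.fderiv_fderiv_uncurry (B : E →L[𝕜] F →L[𝕜] G) (p : E × F) :
    fderiv 𝕜 (fderiv 𝕜 fun p : E × F => B p.1 p.2) p = B.deriv₂ := by
  rw [B.fderiv_uncurry]
  exact B.deriv₂.fderiv

end Bilinear

section InnerComp

variable {E F : Type*} [NormedAddCommGroup E] [InnerProductSpace ℝ E]
  [NormedAddCommGroup F] [InnerProductSpace ℝ F]

theorem forall_inner_add_inner_eq_zero_iff (L : E →ₗ[ℝ] F) (a : E) (b : F) :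
    (∀ (v : E) (ζ : F), ⟪L a, ζ⟫ + ⟪L v, b⟫ = 0) ↔
      a ∈ LinearMap.ker L ∧ b ∈ (LinearMap.range L)ᗮ := by
  constructor
  · intro h
    refine ⟨LinearMap.mem_ker.2 (by simpa using h 0 (L a)), ?_⟩
    rintro _ ⟨v, rfl⟩
    simpa using h v 0
  · rintro ⟨ha, hb⟩ v ζ
    rw [LinearMap.mem_ker.1 ha, inner_zero_left, hb (L v) ⟨v, rfl⟩, add_zero]

variable (L : E →L[ℝ] F)

theorem fderiv_inner_comp_apply (p : E × F) (u : E) (η : F) :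
    fderiv ℝ (fun p : E × F => ⟪L p.1, p.2⟫) p (u, η) = ⟪L p.1, η⟫ + ⟪L u, p.2⟫ :=
  congr($(((innerSL ℝ).comp L).fderiv_uncurry) p (u, η))

theorem fderiv_fderiv_inner_comp_apply (p : E × F) (u v : E) (η ζ : F) :
    fderiv ℝ (fderiv ℝ fun p : E × F => ⟪L p.1, p.2⟫) p (u, η) (v, ζ) =
      ⟪L u, ζ⟫ + ⟪L v, η⟫ :=
  congr($(((innerSL ℝ).comp L).fderiv_fderiv_uncurry p) (u, η) (v, ζ))

theorem fderiv_inner_comp_eq_zero_iff (p : E × F) :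
    fderiv ℝ (fun p : E × F => ⟪L p.1, p.2⟫) p = 0 ↔
      p.1 ∈ LinearMap.ker (L : E →ₗ[ℝ] F) ∧ p.2 ∈ (LinearMap.range (L : E →ₗ[ℝ] F))ᗮ := by
  rw [← forall_inner_add_inner_eq_zero_iff, ContinuousLinearMap.ext_iff, Prod.forall]
  simp only [fderiv_inner_comp_apply, zero_apply]
  rfl

end InnerComp

/-- For the function `f(w, ξ) = ⟨Lw, ξ⟩` with `L : ℝᵐ → ℝⁿ` linear: the
critical set of `f` is the linear subspace `(ker L) × (range L)ᗮ`; the second derivative of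
`f` at any point is the constant symmetric bilinear form
`((u, η), (v, ζ)) ↦ ⟨Lu, ζ⟩ + ⟨Lv, η⟩`; and the kernel (radical) of this bilinear form also
equals `(ker L) × (range L)ᗮ`. In particular, at every critical point the kernel of the
Hessian coincides with the tangent space of the critical set. -/
theorem statement9 (m n : ℕ)
    (L : EuclideanSpace ℝ (Fin m) →ₗ[ℝ] EuclideanSpace ℝ (Fin n))
    (f : EuclideanSpace ℝ (Fin m) × EuclideanSpace ℝ (Fin n) → ℝ)
    (hf : ∀ (w : EuclideanSpace ℝ (Fin m)) (ξ : EuclideanSpace ℝ (Fin n)),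
      f (w, ξ) = ⟪L w, ξ⟫) :
    {p : EuclideanSpace ℝ (Fin m) × EuclideanSpace ℝ (Fin n) | fderiv ℝ f p = 0} =
        {p : EuclideanSpace ℝ (Fin m) × EuclideanSpace ℝ (Fin n) |
          p.1 ∈ LinearMap.ker L ∧ p.2 ∈ (LinearMap.range L)ᗮ} ∧
      (∀ (p : EuclideanSpace ℝ (Fin m) × EuclideanSpace ℝ (Fin n))
          (u v : EuclideanSpace ℝ (Fin m)) (η ζ : EuclideanSpace ℝ (Fin n)),
        fderiv ℝ (fderiv ℝ f) p (u, η) (v, ζ) = ⟪L u, ζ⟫ + ⟪L v, η⟫) ∧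
      {q : EuclideanSpace ℝ (Fin m) × EuclideanSpace ℝ (Fin n) |
          ∀ (v : EuclideanSpace ℝ (Fin m)) (ζ : EuclideanSpace ℝ (Fin n)),
            ⟪L q.1, ζ⟫ + ⟪L v, q.2⟫ = 0} =
        {p : EuclideanSpace ℝ (Fin m) × EuclideanSpace ℝ (Fin n) |
          p.1 ∈ LinearMap.ker L ∧ p.2 ∈ (LinearMap.range L)ᗮ} := by
  obtain rfl : f = fun p => ⟪L.toContinuousLinearMap p.1, p.2⟫ := funext fun p => hf p.1 p.2
  exact ⟨Set.ext fun p => fderiv_inner_comp_eq_zero_iff _ p,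
    fderiv_fderiv_inner_comp_apply _,
    Set.ext fun q => forall_inner_add_inner_eq_zero_iff L q.1 q.2⟩
end
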